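/- arXiv:1402.6570 — 2 statements merged into one kernel-verified Lean document; each statement's English description precedes it below -/
import Mathlib

section
/- If a tree T has a graceful labeling f with f(v) = 0 for some vertex v, then the tree T' obtained from T by attaching k new leaves to v has a graceful labeling f' with f'(v) = 0. -/
open SimpleGraph

/-- The induced label of an edge: the absolute difference of endpoint labels. -/
def edgeLabel {V : Type*} (f : V → ℕ) : Sym2 V → ℕ :=
  Sym2.lift ⟨fun a b => ((f a : ℤ) - (f b : ℤ)).natAbs,
    fun a b => by dsimp only; omega⟩

/-- `f` is a graceful labeling of `G`: the vertex labels are exactly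
`{0, …, |V| - 1}` and the induced edge labels are pairwise distinct. -/
def GracefulLabeling {V : Type*} [Fintype V] (G : SimpleGraph V) (f : V → ℕ) : Prop :=
  Function.Injective f ∧ (∀ v, f v < Fintype.card V) ∧
    (∀ k, k < Fintype.card V → ∃ v, f v = k) ∧
    Set.InjOn (edgeLabel f) G.edgeSet

/-- The tree obtained from `G` by attaching `k` new leaves to the vertex `v`. -/
def attachLeaves {V : Type*} (G : SimpleGraph V) (v : V) (k : ℕ) :
    SimpleGraph (V ⊕ Fin k) :=
  SimpleGraph.fromRel (fun a b =>
    (∃ x y, a = Sum.inl x ∧ b = Sum.inl y ∧ G.Adj x y) ∨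
    (a = Sum.inl v ∧ ∃ i, b = Sum.inr i))

lemma attach_edge_cases {V : Type*} {G : SimpleGraph V} {v : V} {k : ℕ}
    {a b : V ⊕ Fin k} (h : (attachLeaves G v k).Adj a b) :
    (∃ x y, G.Adj x y ∧ a = Sum.inl x ∧ b = Sum.inl y) ∨
    (∃ i : Fin k, (a = Sum.inl v ∧ b = Sum.inr i) ∨ (b = Sum.inl v ∧ a = Sum.inr i)) := by
  rw [attachLeaves, fromRel_adj] at h
  obtain ⟨-, h | h⟩ := h
  · rcases h with ⟨x, y, hx, hy, hadj⟩ | ⟨ha, i, hb⟩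
    · exact Or.inl ⟨x, y, hadj, hx, hy⟩
    · exact Or.inr ⟨i, Or.inl ⟨ha, hb⟩⟩
  · rcases h with ⟨x, y, hx, hy, hadj⟩ | ⟨hb, i, ha⟩
    · exact Or.inl ⟨y, x, hadj.symm, hy, hx⟩
    · exact Or.inr ⟨i, Or.inr ⟨hb, ha⟩⟩

/-- Attaching `k` new leaves to a vertex labeled `0` in a graceful tree preserves
the existence of a graceful labeling assigning `0` to that vertex. -/
theorem stmt4 {V : Type*} [Fintype V] (G : SimpleGraph V) (hT : G.IsTree)
    (v : V) (f : V → ℕ) (hf : GracefulLabeling G f) (hv : f v = 0) (k : ℕ) :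
    ∃ f' : V ⊕ Fin k → ℕ,
      GracefulLabeling (attachLeaves G v k) f' ∧ f' (Sum.inl v) = 0 := by
  classical
  set n := Fintype.card V with hn
  refine ⟨Sum.elim f (fun i => n + i), ⟨?_, ?_, ?_, ?_⟩, by simpa using hv⟩
  · rintro (x | i) (y | j) h <;> simp only [Sum.elim_inl, Sum.elim_inr] at h
    · exact congrArg Sum.inl (hf.1 h)
    · exact absurd h (by have := hf.2.1 x; omega)
    · exact absurd h (by have := hf.2.1 y; omega)
    · exact congrArg Sum.inr (Fin.ext (by omega))
  · rintro (x | i) <;> simp only [Sum.elim_inl, Sum.elim_inr, Fintype.card_sum, Fintype.card_fin]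
    · have := hf.2.1 x; omega
    · have := i.isLt; omega
  · intro m hm
    rw [Fintype.card_sum, Fintype.card_fin] at hm
    by_cases h : m < n
    · obtain ⟨w, hw⟩ := hf.2.2.1 m h
      exact ⟨Sum.inl w, hw⟩
    · exact ⟨Sum.inr ⟨m - n, by omega⟩, by simp; omega⟩
  · intro e1 he1 e2 he2 hlab
    induction e1 using Sym2.ind with | _ a b => ?_
    induction e2 using Sym2.ind with | _ c d => ?_
    rw [mem_edgeSet] at he1 he2
    have hab := he1.ne
    have hcd := he2.ne
    rcases attach_edge_cases he1 with ⟨x, y, hxy, rfl, rfl⟩ | ⟨i, ⟨rfl, rfl⟩ | ⟨rfl, rfl⟩⟩ <;>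
      rcases attach_edge_cases he2 with ⟨x', y', hxy', rfl, rfl⟩ | ⟨j, ⟨rfl, rfl⟩ | ⟨rfl, rfl⟩⟩
    · -- both old edges
      have h1 : edgeLabel f s(x, y) = edgeLabel f s(x', y') := by
        simpa [edgeLabel] using hlab
      have := hf.2.2.2 (G.mem_edgeSet.2 hxy) (G.mem_edgeSet.2 hxy') h1
      have h2 : Sym2.map (Sum.inl : V → V ⊕ Fin k) s(x, y) = Sym2.map (Sum.inl : V → V ⊕ Fin k) s(x', y') := by rw [this]
      simpa using h2
    · exfalso
      have hx := hf.2.1 x; have hy := hf.2.1 y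
      simp only [edgeLabel, Sym2.lift_mk, Sum.elim_inl, Sum.elim_inr, hv] at hlab
      omega
    · exfalso
      have hx := hf.2.1 x; have hy := hf.2.1 y
      simp only [edgeLabel, Sym2.lift_mk, Sum.elim_inl, Sum.elim_inr, hv] at hlab
      omega
    · exfalso
      have hx := hf.2.1 x'; have hy := hf.2.1 y'
      simp only [edgeLabel, Sym2.lift_mk, Sum.elim_inl, Sum.elim_inr, hv] at hlab
      omega
    · have : i = j := by
        simp only [edgeLabel, Sym2.lift_mk, Sum.elim_inl, Sum.elim_inr, hv] at hlab
        exact Fin.ext (by omega)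
      rw [this]
    · have : i = j := by
        simp only [edgeLabel, Sym2.lift_mk, Sum.elim_inl, Sum.elim_inr, hv] at hlab
        exact Fin.ext (by omega)
      rw [this, Sym2.eq_swap]
    · exfalso
      have hx := hf.2.1 x'; have hy := hf.2.1 y'
      simp only [edgeLabel, Sym2.lift_mk, Sum.elim_inl, Sum.elim_inr, hv] at hlab
      omega
    · have : i = j := by
        simp only [edgeLabel, Sym2.lift_mk, Sum.elim_inl, Sum.elim_inr, hv] at hlab
        exact Fin.ext (by omega)
      rw [this, Sym2.eq_swap]
    · have : i = j := by
        simp only [edgeLabel, Sym2.lift_mk, Sum.elim_inl, Sum.elim_inr, hv] at hlab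
        exact Fin.ext (by omega)
      rw [this]
end

section
/- Every caterpillar is graceful. (A caterpillar is a tree in which all vertices are within distance 1 of a central path.) -/
/-!
Induct on the number of vertices, keeping label `0` on the first vertex `a` of the spine.
If `a` has a pendant neighbour `x` off the spine, label the rest inductively and give `x` the
top label `n - 1`: its edge to `a` gets the new label `n - 1`, and all other edge labels are
smaller. Otherwise `a` is a leaf hanging on the next spine vertex `c`; label the rest with
`c ↦ 0`, give `a` the top label, and replace every label `k` by `n - 1 - k`, which keeps the
labeling graceful and moves `a` to `0`.
-/

open SimpleGraph

open Finset

section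

variable {V : Type*}

@[simp] lemma edgeLabel_mk (f : V → ℕ) (u v : V) :
    edgeLabel f s(u, v) = ((f u : ℤ) - (f v : ℤ)).natAbs := rfl

/-- Gracefulness of the subgraph induced on `s`; fixing the ambient vertex type lets the
induction delete vertices without passing to subtypes. -/
def IsGracefulOn (G : SimpleGraph V) (s : Finset V) (f : V → ℕ) : Prop :=
  Set.BijOn f s (Set.Iio #s) ∧ Set.InjOn (edgeLabel f) (G.edgeSet ∩ s.sym2)

namespace IsGracefulOn

variable {G : SimpleGraph V} {s : Finset V} {f : V → ℕ}

lemma lt_card (hf : IsGracefulOn G s f) {v : V} (hv : v ∈ s) : f v < #s := hf.1.mapsTo hv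

lemma edgeLabel_lt_card (hf : IsGracefulOn G s f) {e : Sym2 V} (he : e ∈ s.sym2) :
    edgeLabel f e < #s := by
  induction e using Sym2.ind with
  | _ u v =>
    rw [mem_sym2_iff, Sym2.forall_mem_pair] at he
    have := hf.lt_card he.1
    have := hf.lt_card he.2
    simp only [edgeLabel_mk]
    omega

lemma compl (hf : IsGracefulOn G s f) : IsGracefulOn G s (fun v => #s - 1 - f v) := by
  have hflip : Set.BijOn (fun k => #s - 1 - k) (Set.Iio #s) (Set.Iio #s) :=
    Set.InvOn.bijOn (f' := fun k => #s - 1 - k)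
      ⟨fun k hk => by simp only [Set.mem_Iio] at hk ⊢; omega,
        fun k hk => by simp only [Set.mem_Iio] at hk ⊢; omega⟩
      (fun k hk => by simp only [Set.mem_Iio] at hk ⊢; omega)
      (fun k hk => by simp only [Set.mem_Iio] at hk ⊢; omega)
  refine ⟨hflip.comp hf.1, hf.2.congr fun e he => ?_⟩
  induction e using Sym2.ind with
  | _ u v =>
    rw [Set.mem_inter_iff, mem_coe, mem_sym2_iff, Sym2.forall_mem_pair] at he
    have := hf.lt_card he.2.1
    have := hf.lt_card he.2.2
    simp only [edgeLabel_mk]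
    omega

lemma insert_leaf [DecidableEq V] {x w : V} (hx : x ∉ s)
    (hleaf : ∀ y ∈ s, G.Adj x y → y = w) (hf : IsGracefulOn G s f) (hw : f w = 0) :
    IsGracefulOn G (insert x s) (Function.update f x #s) := by
  set g := Function.update f x #s
  have hgs : Set.EqOn f g s := fun v hv =>
    (Function.update_of_ne (ne_of_mem_of_not_mem hv hx) ..).symm
  have hedge_s : ∀ e ∈ s.sym2, edgeLabel g e = edgeLabel f e := by
    intro e he
    induction e using Sym2.ind with
    | _ u v =>
      rw [mem_sym2_iff, Sym2.forall_mem_pair] at he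
      simp only [edgeLabel_mk, ← hgs he.1, ← hgs he.2]
  have hedge_x : ∀ e ∈ G.edgeSet ∩ (insert x s).sym2, x ∈ e →
      e = s(x, w) ∧ edgeLabel g e = #s := by
    rintro e ⟨hadj, hins⟩ hxe
    obtain ⟨y, rfl⟩ := Sym2.mem_iff_exists.mp hxe
    rw [mem_edgeSet] at hadj
    have hys : y ∈ s := by
      simpa [hadj.ne'] using (mem_sym2_iff.mp hins) y (Sym2.mem_mk_right x y)
    obtain rfl := hleaf y hys hadj
    simp [g, hw, ← hgs hys]
  have hsym2 : ∀ e ∈ (insert x s).sym2, x ∉ e → e ∈ s.sym2 := fun e he hxe =>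
    mem_sym2_iff.mpr fun v hv =>
      (mem_insert.mp (mem_sym2_iff.mp he v hv)).resolve_left (ne_of_mem_of_not_mem hv hxe)
  refine ⟨?_, ?_⟩
  · rw [card_insert_of_notMem hx, coe_insert, Set.Iio_add_one_eq_Iic, ← Set.Iio_insert]
    simpa [g] using (hf.1.congr hgs).insert (a := x) (by simp [g])
  · intro e₁ he₁ e₂ he₂ heq
    by_cases hx₁ : x ∈ e₁ <;> by_cases hx₂ : x ∈ e₂
    · rw [(hedge_x e₁ he₁ hx₁).1, (hedge_x e₂ he₂ hx₂).1]
    · have := hf.edgeLabel_lt_card (hsym2 e₂ he₂.2 hx₂)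
      rw [← hedge_s e₂ (hsym2 e₂ he₂.2 hx₂), ← heq, (hedge_x e₁ he₁ hx₁).2] at this
      omega
    · have := hf.edgeLabel_lt_card (hsym2 e₁ he₁.2 hx₁)
      rw [← hedge_s e₁ (hsym2 e₁ he₁.2 hx₁), heq, (hedge_x e₂ he₂ hx₂).2] at this
      omega
    · have h₁ := hsym2 e₁ he₁.2 hx₁
      have h₂ := hsym2 e₂ he₂.2 hx₂
      exact hf.2 ⟨he₁.1, h₁⟩ ⟨he₂.1, h₂⟩ (by rwa [← hedge_s e₁ h₁, ← hedge_s e₂ h₂])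

/-- Complementing the labels moves the new leaf from the top label to `0`. -/
lemma exists_insert_leaf_eq_zero [DecidableEq V] {x w : V} (hx : x ∉ s)
    (hleaf : ∀ y ∈ s, G.Adj x y → y = w) (hf : IsGracefulOn G s f) (hw : f w = 0) :
    ∃ g, IsGracefulOn G (insert x s) g ∧ g x = 0 :=
  ⟨_, (hf.insert_leaf hx hleaf hw).compl, by simp [card_insert_of_notMem hx]⟩

lemma gracefulLabeling [Fintype V] (hf : IsGracefulOn G univ f) : GracefulLabeling G f := by
  obtain ⟨hbij, hedge⟩ := hf
  rw [coe_univ, card_univ] at hbij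
  refine ⟨Set.injOn_univ.mp hbij.injOn, fun v => hbij.mapsTo (Set.mem_univ v),
    fun k hk => ?_, by simpa using hedge⟩
  obtain ⟨v, -, hv⟩ := hbij.surjOn hk
  exact ⟨v, hv⟩

end IsGracefulOn

lemma isGracefulOn_singleton (G : SimpleGraph V) (a : V) : IsGracefulOn G {a} (fun _ => 0) := by
  refine ⟨by simp [Set.bijOn_singleton],
    ((Set.subsingleton_singleton (a := s(a, a))).anti ?_).injOn _⟩
  simp [sym2_singleton]

namespace SimpleGraph

variable {G : SimpleGraph V}

lemma Walk.IsPath.exists_isPath_support_subset {a b v : V} {p : G.Walk a b} (hp : p.IsPath)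
    (hv : v ∈ p.support ∨ ∃ u ∈ p.support, G.Adj u v) :
    ∃ q : G.Walk a v, q.IsPath ∧ ∀ z ∈ q.support, z = v ∨ z ∈ p.support := by
  classical
  by_cases hvp : v ∈ p.support
  · exact ⟨p.takeUntil v hvp, hp.takeUntil hvp,
      fun z hz => .inr (p.support_takeUntil_subset_support hvp hz)⟩
  obtain ⟨u, hup, huv⟩ := hv.resolve_left hvp
  have hsub := p.support_takeUntil_subset_support hup
  refine ⟨(p.takeUntil u hup).concat huv, (hp.takeUntil hup).concat (fun h => hvp (hsub h)) huv,
    fun z hz => ?_⟩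
  rw [Walk.support_concat, List.mem_append, List.mem_singleton] at hz
  exact hz.symm.imp id (@hsub z)

/-- Otherwise `x`, `y` and a path from `a` to `y` along `p` would close a cycle through `a`. -/
lemma IsAcyclic.eq_of_adj_of_notMem_support (hG : G.IsAcyclic) {a b x y : V} {p : G.Walk a b}
    (hp : p.IsPath) (hx : x ∉ p.support) (hax : G.Adj a x)
    (hy : y ∈ p.support ∨ ∃ u ∈ p.support, G.Adj u y) (hxy : G.Adj x y) : y = a := by
  obtain ⟨q, hq, hqp⟩ := hp.exists_isPath_support_subset hy
  have hxq : x ∉ q.support := fun h => (hqp x h).elim hxy.ne hx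
  simpa using hG.eq_snd_of_adj_start (hq.cons (h := hax.symm) hxq) hxy (by simp)

lemma Connected.eq_or_adj_of_dist_le_one (hG : G.Connected) {u v : V} (h : G.dist u v ≤ 1) :
    u = v ∨ G.Adj u v := by
  rcases Nat.le_one_iff_eq_zero_or_eq_one.mp h with h | h
  · exact .inl (hG.dist_eq_zero_iff.mp h)
  · exact .inr (dist_eq_one_iff_adj.mp h)

theorem IsAcyclic.exists_isGracefulOn_of_isPath (hG : G.IsAcyclic) (s : Finset V) {a b : V}
    (p : G.Walk a b) (hp : p.IsPath)
    (hps : ∀ v ∈ p.support, v ∈ s) (hdom : ∀ v ∈ s, v ∈ p.support ∨ ∃ u ∈ p.support, G.Adj u v) :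
    ∃ f, IsGracefulOn G s f ∧ f a = 0 := by
  classical
  induction s using Finset.strongInduction generalizing a b with
  | H s ih =>
  by_cases hpendant : ∃ x ∈ s, x ∉ p.support ∧ G.Adj a x
  · obtain ⟨x, hxs, hxp, hax⟩ := hpendant
    have hxa : a ≠ x := hax.ne
    obtain ⟨f, hf, hfa⟩ := ih (s.erase x) (erase_ssubset hxs) p hp
      (fun v hv => mem_erase.mpr ⟨ne_of_mem_of_not_mem hv hxp, hps v hv⟩)
      (fun v hv => hdom v (mem_of_mem_erase hv))
    have hleaf : ∀ y ∈ s.erase x, G.Adj x y → y = a := fun y hy hxy =>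
      hG.eq_of_adj_of_notMem_support hp hxp hax (hdom y (mem_of_mem_erase hy)) hxy
    refine ⟨Function.update f x #(s.erase x), ?_, by simpa [hxa] using hfa⟩
    simpa [insert_erase hxs] using hf.insert_leaf (notMem_erase x s) hleaf hfa
  have hnear : ∀ v ∈ s, G.Adj a v → v ∈ p.support := fun v hv hav => by
    by_contra hvp
    exact hpendant ⟨v, hv, hvp, hav⟩
  cases p with
  | nil =>
    have hs : s = {a} := by
      refine eq_singleton_iff_unique_mem.mpr ⟨hps a (by simp), fun v hv => ?_⟩
      rcases hdom v hv with h | ⟨u, hu, huv⟩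
      · simpa using h
      · rw [Walk.support_nil, List.mem_singleton] at hu
        subst hu
        simpa using hnear v hv huv
    exact ⟨fun _ => 0, hs ▸ isGracefulOn_singleton G a, rfl⟩
  | @cons _ c _ hac q =>
    obtain ⟨hq, haq⟩ := (Walk.cons_isPath_iff hac q).mp hp
    have has : a ∈ s := hps a (by simp)
    have hdom' : ∀ v ∈ s.erase a, v ∈ q.support ∨ ∃ u ∈ q.support, G.Adj u v := by
      intro v hv
      obtain ⟨hva, hvs⟩ := mem_erase.mp hv
      rcases hdom v hvs with h | ⟨u, hu, huv⟩
      · exact .inl ((List.mem_cons.mp h).resolve_left hva)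
      rcases List.mem_cons.mp hu with rfl | hu
      · exact .inl ((List.mem_cons.mp (hnear v hvs huv)).resolve_left hva)
      · exact .inr ⟨u, hu, huv⟩
    obtain ⟨f, hf, hfc⟩ := ih (s.erase a) (erase_ssubset has) q hq
      (fun v hv => mem_erase.mpr ⟨ne_of_mem_of_not_mem hv haq, hps v (by simp [hv])⟩) hdom'
    have hleaf : ∀ y ∈ s.erase a, G.Adj a y → y = c := fun y hy hay => by
      simpa using hG.eq_snd_of_adj_start hp hay (hnear y (mem_of_mem_erase hy) hay)
    rw [← insert_erase has]
    exact hf.exists_insert_leaf_eq_zero (notMem_erase a s) hleaf hfc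

end SimpleGraph

end

/-- Every caterpillar (a tree all of whose vertices are within distance 1 of a
central path) is graceful. -/
theorem stmt7 {V : Type*} [Fintype V] (G : SimpleGraph V) (hT : G.IsTree)
    (hcat : ∃ (a b : V) (p : G.Walk a b), p.IsPath ∧
      ∀ v : V, ∃ u ∈ p.support, G.dist u v ≤ 1) :
    ∃ f : V → ℕ, GracefulLabeling G f := by
  obtain ⟨a, b, p, hp, hdist⟩ := hcat
  have hdom : ∀ v ∈ (univ : Finset V), v ∈ p.support ∨ ∃ u ∈ p.support, G.Adj u v := by
    intro v _
    obtain ⟨u, hu, huv⟩ := hdist v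
    exact (hT.connected.eq_or_adj_of_dist_le_one huv).imp (fun h : u = v => h ▸ hu) (⟨u, hu, ·⟩)
  obtain ⟨f, hf, -⟩ := hT.isAcyclic.exists_isGracefulOn_of_isPath univ p hp (by simp) hdom
  exact ⟨f, hf.gracefulLabeling⟩
end
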